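/- Fix T ≥ 1, a real number ε > 0, n×n real matrices A₁,…,A_{T−1}, symmetric positive definite n×n matrices W₁,…,W_{T−1}, a symmetric positive definite n×n matrix P₀, symmetric positive semidefinite n×n matrices Θ₁,…,Θ_T, and positive reals γ₁,…,γ_T. Consider the feasible set F of tuples (P₁,…,P_T, Π₁,…,Π_T) of symmetric n×n matrices satisfying: Π_t ⪰ ε I for t = 1,…,T; P₁ ⪯ P₀; P_T = Π_T; P_{t+1} ⪯ A_t P_t A_tᵀ + W_t for t = 1,…,T−1; and [[P_t − Π_t, P_t A_tᵀ], [A_t P_t, W_t + A_t P_t A_tᵀ]] ⪰ 0 for t = 1,…,T−1. If F is nonempty, then the function J(P, Π) = Σ_{t=1}^T ( (1/2)·Tr(Θ_t P_t) − (γ_t/2)·log det Π_t ) attains its minimum on F. -/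

import Mathlib

/-!
Every feasible point satisfies `0 ⪯ Π_t ⪯ P_t ⪯ B_t`, where `B_1 = P₀` and
`B_{t+1} = A_t B_t A_tᵀ + W_t` propagates the bound `P₁ ⪯ P₀` through the dynamics; a
Loewner interval `[0, B]` is compact since its entries are bounded by `tr B`. Hence the
closed feasible set is compact. On it `Π_t ⪰ εI`, so `log det Π_t` is continuous and the
cost attains its minimum.
-/

open Matrix
open scoped MatrixOrder

namespace Matrix

lemma PosSemidef.toBlocks₁₁ {m n R : Type*} [Ring R] [PartialOrder R] [StarRing R]
    {M : Matrix (m ⊕ n) (m ⊕ n) R} (hM : M.PosSemidef) : M.toBlocks₁₁.PosSemidef :=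
  hM.submatrix Sum.inl

lemma PosDef.of_smul_one_le {m : Type*} [DecidableEq m] {ε : ℝ} (hε : 0 < ε) {X : Matrix m m ℝ}
    (h : ε • 1 ≤ X) : X.PosDef := by
  simpa using (PosDef.one.smul hε).add_posSemidef h

lemma PosSemidef.two_mul_abs_apply_le {m : Type*} [DecidableEq m] {X : Matrix m m ℝ}
    (hX : X.PosSemidef) (a b : m) : 2 * |X a b| ≤ X a a + X b b := by
  have hsymm : X b a = X a b := hX.isHermitian.apply a b
  have hquad (s : ℝ) : 0 ≤ X a a + s * X a b + s * X b a + s ^ 2 * X b b := by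
    have h := hX.2 (Finsupp.single a 1 + Finsupp.single b s)
    simp [Finsupp.sum_add_index, mul_add, add_mul] at h
    linarith
  have h₁ := hquad 1
  have h₂ := hquad (-1)
  rcases abs_choice (X a b) with h | h <;> rw [h] <;> linarith

variable {m : Type*} [Fintype m]

lemma isClosed_setOf_posSemidef : IsClosed {M : Matrix m m ℝ | M.PosSemidef} := by
  simp only [posSemidef_iff_dotProduct_mulVec, Set.ofPred_and, Set.ofPred_forall]
  exact (isClosed_eq (by fun_prop) continuous_id).inter
    (isClosed_iInter fun x => isClosed_le continuous_const (by fun_prop))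

lemma PosSemidef.apply_le_trace {X : Matrix m m ℝ} (hX : X.PosSemidef) (a : m) :
    X a a ≤ X.trace :=
  Finset.single_le_sum (fun b _ => hX.diag_nonneg (i := b)) (Finset.mem_univ a)

lemma PosSemidef.abs_apply_le_trace {X : Matrix m m ℝ} (hX : X.PosSemidef) (a b : m) :
    |X a b| ≤ X.trace := by
  classical
  linarith [hX.two_mul_abs_apply_le a b, hX.apply_le_trace a, hX.apply_le_trace b]

lemma isCompact_Icc_zero (C : Matrix m m ℝ) : IsCompact (Set.Icc 0 C) := by
  have hbox : Set.Icc 0 C ⊆ Set.univ.pi fun _ : m => Set.univ.pi fun _ : m =>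
      Set.Icc (-C.trace) C.trace := by
    rintro X ⟨hX, hXC⟩ a - b -
    have htrace : X.trace ≤ C.trace := by
      linarith [trace_sub C X ▸ PosSemidef.trace_nonneg hXC]
    exact abs_le.mp ((hX.posSemidef.abs_apply_le_trace a b).trans htrace)
  refine (isCompact_univ_pi fun _ => isCompact_univ_pi fun _ => isCompact_Icc).of_isClosed_subset
    ?_ hbox
  exact (isClosed_setOf_posSemidef.preimage (by fun_prop)).inter
    (isClosed_setOf_posSemidef.preimage (by fun_prop))

end Matrix

section CovarianceScheduling

variable {m : Type*} [Fintype m]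

def propagatedCovBound (P₀ : Matrix m m ℝ) (A W : ℕ → Matrix m m ℝ) : ℕ → Matrix m m ℝ
  | 0 => P₀
  | k + 1 => A (k + 1) * propagatedCovBound P₀ A W k * (A (k + 1))ᵀ + W (k + 1)

lemma le_propagatedCovBound {T : ℕ} (hT : 1 ≤ T) {P₀ : Matrix m m ℝ} {A W : ℕ → Matrix m m ℝ}
    {P : Fin T → Matrix m m ℝ} (h₀ : P ⟨0, hT⟩ ≤ P₀)
    (hstep : ∀ i (h : i + 1 < T),
      P ⟨i + 1, h⟩ ≤ A (i + 1) * P ⟨i, Nat.lt_of_succ_lt h⟩ * (A (i + 1))ᵀ + W (i + 1)) :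
    ∀ i : Fin T, P i ≤ propagatedCovBound P₀ A W i := by
  rintro ⟨k, hk⟩
  induction k with
  | zero => exact h₀
  | succ k ih =>
    have hconj := star_right_conjugate_le_conjugate (ih (by omega)) (A (k + 1))
    rw [star_eq_conjTranspose, conjTranspose_eq_transpose_of_trivial] at hconj
    exact (hstep k hk).trans (add_le_add hconj le_rfl)

variable [DecidableEq m]

def covFeasibleSet (T : ℕ) (hT : 1 ≤ T) (ε : ℝ) (A W : ℕ → Matrix m m ℝ) (P₀ : Matrix m m ℝ) :
    Set ((Fin T → Matrix m m ℝ) × (Fin T → Matrix m m ℝ)) :=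
  {PQ |
      (∀ i, (PQ.1 i).IsHermitian) ∧ (∀ i, (PQ.2 i).IsHermitian) ∧
      (∀ i, (PQ.2 i - ε • (1 : Matrix m m ℝ)).PosSemidef) ∧
      (P₀ - PQ.1 ⟨0, hT⟩).PosSemidef ∧
      PQ.1 ⟨T - 1, Nat.sub_one_lt_of_lt hT⟩ = PQ.2 ⟨T - 1, Nat.sub_one_lt_of_lt hT⟩ ∧
      (∀ i : ℕ, ∀ h : i + 1 < T,
        (A (i + 1) * PQ.1 ⟨i, Nat.lt_of_succ_lt h⟩ * (A (i + 1))ᵀ + W (i + 1)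
          - PQ.1 ⟨i + 1, h⟩).PosSemidef) ∧
      (∀ i : ℕ, ∀ h : i + 1 < T,
        (Matrix.fromBlocks
          (PQ.1 ⟨i, Nat.lt_of_succ_lt h⟩ - PQ.2 ⟨i, Nat.lt_of_succ_lt h⟩)
          (PQ.1 ⟨i, Nat.lt_of_succ_lt h⟩ * (A (i + 1))ᵀ)
          (A (i + 1) * PQ.1 ⟨i, Nat.lt_of_succ_lt h⟩)
          (W (i + 1) + A (i + 1) * PQ.1 ⟨i, Nat.lt_of_succ_lt h⟩ * (A (i + 1))ᵀ)).PosSemidef)}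

variable {T : ℕ} {hT : 1 ≤ T} {ε : ℝ} {A W : ℕ → Matrix m m ℝ} {P₀ : Matrix m m ℝ}

lemma isClosed_covFeasibleSet : IsClosed (covFeasibleSet T hT ε A W P₀) := by
  simp only [covFeasibleSet, Set.ofPred_and, Set.ofPred_forall]
  refine .inter ?_ (.inter ?_ (.inter ?_ (.inter ?_ (.inter ?_ (.inter ?_ ?_)))))
  all_goals first
    | exact isClosed_eq (by fun_prop) (by fun_prop)
    | exact isClosed_iInter fun i => isClosed_eq (by fun_prop) (by fun_prop)
    | exact isClosed_setOf_posSemidef.preimage (by fun_prop)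
    | exact isClosed_iInter fun i => isClosed_setOf_posSemidef.preimage (by fun_prop)
    | exact isClosed_iInter fun i => isClosed_iInter fun h =>
        isClosed_setOf_posSemidef.preimage (by fun_prop)

lemma covFeasibleSet_subset (hε : 0 ≤ ε) :
    covFeasibleSet T hT ε A W P₀ ⊆
      (Set.univ.pi fun i : Fin T => Set.Icc 0 (propagatedCovBound P₀ A W i)) ×ˢ
        (Set.univ.pi fun i : Fin T => Set.Icc 0 (propagatedCovBound P₀ A W i)) := by
  rintro PQ ⟨-, -, hQε, hP₀, hlast, hstep, hblock⟩
  have hQ_nonneg (i : Fin T) : 0 ≤ PQ.2 i := (PosSemidef.one.smul hε).nonneg.trans (hQε i)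
  have hQ_le_P : ∀ i, PQ.2 i ≤ PQ.1 i := by
    rintro ⟨i, hi⟩
    rcases Nat.lt_or_ge (i + 1) T with h | h
    · exact le_iff.mpr (by simpa using (hblock i h).toBlocks₁₁)
    · obtain rfl : i = T - 1 := by omega
      exact hlast.ge
  have hP_le := le_propagatedCovBound hT hP₀ hstep
  exact ⟨fun i _ => ⟨(hQ_nonneg i).trans (hQ_le_P i), hP_le i⟩,
    fun i _ => ⟨hQ_nonneg i, (hQ_le_P i).trans (hP_le i)⟩⟩

lemma isCompact_covFeasibleSet (hε : 0 ≤ ε) : IsCompact (covFeasibleSet T hT ε A W P₀) :=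
  ((isCompact_univ_pi fun _ => isCompact_Icc_zero _).prod
    (isCompact_univ_pi fun _ => isCompact_Icc_zero _)).of_isClosed_subset
    isClosed_covFeasibleSet (covFeasibleSet_subset hε)

noncomputable def covCost (T : ℕ) (Θ : ℕ → Matrix m m ℝ) (γ : ℕ → ℝ)
    (PQ : (Fin T → Matrix m m ℝ) × (Fin T → Matrix m m ℝ)) : ℝ :=
  ∑ i : Fin T, ((1 / 2) * (Θ (i.val + 1) * PQ.1 i).trace
    - γ (i.val + 1) / 2 * Real.log (PQ.2 i).det)

lemma continuousOn_covCost (hε : 0 < ε) (Θ : ℕ → Matrix m m ℝ) (γ : ℕ → ℝ) :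
    ContinuousOn (covCost T Θ γ) (covFeasibleSet T hT ε A W P₀) := by
  refine continuousOn_finsetSum _ fun i _ => .sub (by fun_prop) (.mul continuousOn_const ?_)
  refine .log (by fun_prop) ?_
  rintro PQ ⟨-, -, hQε, -⟩
  exact (PosDef.of_smul_one_le hε (hQε i)).det_pos.ne'

end CovarianceScheduling

/-- Existence of an optimal solution to the covariance-scheduling max-det problem.
Times `t = 1, …, T` are indexed by `Fin T` (index `i` corresponds to time `i + 1`).
`PQ.1` is the tuple `(P₁, …, P_T)` and `PQ.2` is `(Π₁, …, Π_T)`. -/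
theorem stmt11 {n : ℕ} (T : ℕ) (hT : 1 ≤ T) (ε : ℝ) (hε : 0 < ε)
    (A W : ℕ → Matrix (Fin n) (Fin n) ℝ)
    (P₀ : Matrix (Fin n) (Fin n) ℝ)
    (Θ : ℕ → Matrix (Fin n) (Fin n) ℝ)
    (γ : ℕ → ℝ)
    (F : Set ((Fin T → Matrix (Fin n) (Fin n) ℝ) × (Fin T → Matrix (Fin n) (Fin n) ℝ)))
    (hF : F = {PQ |
      (∀ i, (PQ.1 i).IsHermitian) ∧ (∀ i, (PQ.2 i).IsHermitian) ∧
      (∀ i, (PQ.2 i - ε • (1 : Matrix (Fin n) (Fin n) ℝ)).PosSemidef) ∧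
      (P₀ - PQ.1 ⟨0, hT⟩).PosSemidef ∧
      PQ.1 ⟨T - 1, by omega⟩ = PQ.2 ⟨T - 1, by omega⟩ ∧
      (∀ i : ℕ, ∀ h : i + 1 < T,
        (A (i + 1) * PQ.1 ⟨i, by omega⟩ * (A (i + 1))ᵀ + W (i + 1)
          - PQ.1 ⟨i + 1, h⟩).PosSemidef) ∧
      (∀ i : ℕ, ∀ h : i + 1 < T,
        (Matrix.fromBlocks
          (PQ.1 ⟨i, by omega⟩ - PQ.2 ⟨i, by omega⟩)
          (PQ.1 ⟨i, by omega⟩ * (A (i + 1))ᵀ)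
          (A (i + 1) * PQ.1 ⟨i, by omega⟩)
          (W (i + 1) + A (i + 1) * PQ.1 ⟨i, by omega⟩ * (A (i + 1))ᵀ)).PosSemidef)})
    (J : (Fin T → Matrix (Fin n) (Fin n) ℝ) × (Fin T → Matrix (Fin n) (Fin n) ℝ) → ℝ)
    (hJ : J = fun PQ => ∑ i : Fin T,
      ((1 / 2) * (Θ (i.val + 1) * PQ.1 i).trace
        - γ (i.val + 1) / 2 * Real.log (PQ.2 i).det))
    (hFne : F.Nonempty) :
    ∃ PQ ∈ F, ∀ PQ' ∈ F, J PQ ≤ J PQ' := by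
  change F = covFeasibleSet T hT ε A W P₀ at hF
  change J = covCost T Θ γ at hJ
  subst hF hJ
  obtain ⟨PQ, hPQ, hmin⟩ :=
    (isCompact_covFeasibleSet hε.le).exists_isMinOn hFne (continuousOn_covCost hε Θ γ)
  exact ⟨PQ, hPQ, fun PQ' hPQ' => hmin hPQ'⟩
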